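/- Suppose a, b are nonzero vectors in the plane ℝ² with |a| ≤ |a - b| and |b| ≤ |a - b|. Then the normalized vectors satisfy |a/|a| - b/|b|| ≥ 1, i.e., the angle between a and b is at least 60 degrees. -/

import Mathlib

/-! If `‖a - b‖` is the longest side of the triangle `0, a, b`, then by the law of cosines
`2⟪a, b⟫ = ‖a‖² + ‖b‖² - ‖a - b‖² ≤ min(‖a‖, ‖b‖)² ≤ ‖a‖ ‖b‖`, so the unit vectors `u, v` in the
directions of `a, b` have `⟪u, v⟫ ≤ 1/2` and hence `‖u - v‖² = 2 - 2⟪u, v⟫ ≥ 1`. -/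

open RealInnerProductSpace

variable {F : Type*} [NormedAddCommGroup F] [InnerProductSpace ℝ F]

theorem two_mul_real_inner_le_norm_mul_norm_of_le_norm_sub {a b : F}
    (ha : ‖a‖ ≤ ‖a - b‖) (hb : ‖b‖ ≤ ‖a - b‖) : 2 * ⟪a, b⟫ ≤ ‖a‖ * ‖b‖ := by
  have law_of_cosines := norm_sub_sq_real a b
  rcases le_total ‖a‖ ‖b‖ with hab | hba
  · nlinarith [norm_nonneg a]
  · nlinarith [norm_nonneg b]

theorem real_inner_normalize_le_half {a b : F} (ha : a ≠ 0) (hb : b ≠ 0)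
    (hab : 2 * ⟪a, b⟫ ≤ ‖a‖ * ‖b‖) : ⟪‖a‖⁻¹ • a, ‖b‖⁻¹ • b⟫ ≤ 1 / 2 := by
  have hna : 0 < ‖a‖ := norm_pos_iff.2 ha
  have hnb : 0 < ‖b‖ := norm_pos_iff.2 hb
  rw [real_inner_smul_left, real_inner_smul_right, ← mul_assoc, ← mul_inv,
    inv_mul_le_iff₀ (by positivity)]
  linarith

theorem one_le_norm_sub_of_real_inner_le_half {u v : F} (hu : ‖u‖ = 1) (hv : ‖v‖ = 1)
    (huv : ⟪u, v⟫ ≤ 1 / 2) : 1 ≤ ‖u - v‖ := by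
  have h : 1 ≤ ‖u - v‖ ^ 2 := by rw [norm_sub_sq_real, hu, hv]; linarith
  nlinarith [norm_nonneg (u - v)]

/-- Lemma 2.5 of Mattila-type: if `a, b` are nonzero vectors in the
plane with `‖a‖ ≤ ‖a - b‖` and `‖b‖ ≤ ‖a - b‖`, then the normalized vectors satisfy
`‖a/‖a‖ - b/‖b‖‖ ≥ 1`, i.e. the angle between `a` and `b` is at least 60 degrees. -/
theorem stmt0 (a b : EuclideanSpace ℝ (Fin 2)) (ha : a ≠ 0) (hb : b ≠ 0)
    (hab1 : ‖a‖ ≤ ‖a - b‖) (hab2 : ‖b‖ ≤ ‖a - b‖) :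
    1 ≤ ‖‖a‖⁻¹ • a - ‖b‖⁻¹ • b‖ :=
  one_le_norm_sub_of_real_inner_le_half (norm_smul_inv_norm ha) (norm_smul_inv_norm hb)
    (real_inner_normalize_le_half ha hb
      (two_mul_real_inner_le_norm_mul_norm_of_le_norm_sub hab1 hab2))
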